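/- Let γ : ℝ → ℝ² be a smooth closed immersed plane curve parametrized by arc-length with period L > 0, and let x ∈ ℝ² be a point on the curve such that the set γ⁻¹(x) ∩ [0,L) is finite. Then 8·#(γ⁻¹(x) ∩ [0,L)) = ∫_γ (k² − k₀²)·|γ − x| ds, where k₀(s) = 2·| ⟨γ(s) − x, ν(s)⟩/|γ(s) − x|² + k(s)/2 | (defined for γ(s) ≠ x, with the integrand extended by its finite limiting values). -/

import Mathlib

open Real MeasureTheory

noncomputable section

def dotp (v w : ℝ × ℝ) : ℝ := v.1 * w.1 + v.2 * w.2

def perp (v : ℝ × ℝ) : ℝ × ℝ := (-v.2, v.1)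

/-- Unit normal of an arc-length parametrised curve: the unit tangent rotated by `π/2`. -/
def sNu (γ : ℝ → ℝ × ℝ) : ℝ → ℝ × ℝ := fun s => perp (deriv γ s)

/-- Curvature `k = ⟨γ_ss, ν⟩` of an arc-length parametrised plane curve. -/
def sCurv (γ : ℝ → ℝ × ℝ) : ℝ → ℝ := fun s => dotp (deriv (deriv γ) s) (sNu γ s)

/-!
Away from the preimages of `x`, the integrand is the derivative of `F = -4 cos θ`, where `θ` is
the angle between the chord `γ - x` and the tangent `τ`; this uses `γ'' = k ν` and
`|γ - x|² = ⟨γ - x, τ⟩² + ⟨γ - x, ν⟩²`. At a preimage `t` the integrand stays bounded, since by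
L'Hôpital `⟨γ - x, ν⟩ / |γ - x|² → -k(t) / 2`, while `F` jumps from `4` to `-4` because the chord
direction flips from `-τ(t)` to `τ(t)`. The fundamental theorem of calculus on the pieces between
preimages turns the integral over a period into the sum of these jumps, `8` per preimage; the
boundary terms cancel by periodicity, or supply the jump at `0` when `γ 0 = x`.
-/

open Set Filter Topology Function
open scoped Finset

theorem Finset.sum_filter_Ioo_eq_add_add {α M : Type*} [LinearOrder α] [AddCommMonoid M]
    (Z : Finset α) (g : α → M) {a p b : α} (hp : p ∈ Z) (hap : a < p) (hpb : p < b) :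
    ∑ q ∈ Z with q ∈ Set.Ioo a b, g q
      = ∑ q ∈ Z with q ∈ Set.Ioo a p, g q + g p + ∑ q ∈ Z with q ∈ Set.Ioo p b, g q := by
  rw [← Finset.sum_ite_eq_of_mem' Z p g hp]
  simp only [Finset.sum_filter, ← Finset.sum_add_distrib]
  refine Finset.sum_congr rfl fun q _ => ?_
  rcases lt_trichotomy q p with h | rfl | h
  · simp [h, h.ne, h.trans hpb, h.le.not_gt]
  · simp [hap, hpb]
  · simp [h, h.ne', hap.trans h, h.le.not_gt]

theorem Finset.induction_on_Ioo {α : Type*} [LinearOrder α] (Z : Finset α) {P : α → α → Prop}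
    {a b : α} (hab : a < b)
    (gap : ∀ a' b', a ≤ a' → a' < b' → b' ≤ b → (∀ p ∈ Z, p ∉ Set.Ioo a' b') → P a' b')
    (split : ∀ a' p b', a ≤ a' → b' ≤ b → p ∈ Z → a' < p → p < b' → P a' p → P p b' → P a' b') :
    P a b := by
  suffices ∀ n a' b', #{p ∈ Z | p ∈ Set.Ioo a' b'} = n → a ≤ a' → a' < b' → b' ≤ b → P a' b' from
    this _ a b rfl le_rfl hab le_rfl
  intro n
  induction n using Nat.strong_induction_on with
  | _ n ih =>
    intro a' b' hn ha' hab' hb'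
    by_cases h : ∃ p ∈ Z, p ∈ Set.Ioo a' b'
    · obtain ⟨p, hpZ, hap, hpb⟩ := h
      have hlt : ∀ c d, a' ≤ c → d ≤ b' → p ∉ Set.Ioo c d → #{q ∈ Z | q ∈ Set.Ioo c d} < n := by
        intro c d hc hd hp
        rw [← hn]
        refine Finset.card_lt_card ((Finset.ssubset_iff_of_subset ?_).2 ⟨p, ?_, ?_⟩)
        · exact Finset.monotone_filter_right _ fun q _ hq => Set.Ioo_subset_Ioo hc hd hq
        · simp [hpZ, hap, hpb]
        · simpa [hpZ] using hp
      exact split a' p b' ha' hb' hpZ hap hpb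
        (ih _ (hlt a' p le_rfl hpb.le (by simp)) a' p rfl ha' hap (hpb.le.trans hb'))
        (ih _ (hlt p b' hap.le le_rfl (by simp)) p b' rfl (ha'.trans hap.le) hpb hb')
    · push Not at h
      exact gap a' b' ha' hab' hb' h

theorem Set.ncard_sep_Ico_eq {α : Type*} [LinearOrder α] {a b : α} (hab : a < b) (P : α → Prop)
    [DecidablePred P] (hfin : {s ∈ Ioo a b | P s}.Finite) :
    {s ∈ Ico a b | P s}.ncard = {s ∈ Ioo a b | P s}.ncard + if P a then 1 else 0 := by
  rw [← Ioo_insert_left hab]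
  split_ifs with ha
  · rw [← ncard_insert_of_notMem (fun h => lt_irrefl a h.1.1) hfin]
    congr 1
    ext s
    grind
  · rw [add_zero]
    congr 1
    ext s
    grind

section PiecewiseFTC

variable {E : Type*} [NormedAddCommGroup E] {f F : ℝ → E} {a b : ℝ}

theorem ContinuousOn.intervalIntegrable_of_tendsto {la lb : E} (hab : a ≤ b)
    (hf : ContinuousOn f (Ioo a b)) (ha : Tendsto f (𝓝[>] a) (𝓝 la))
    (hb : Tendsto f (𝓝[<] b) (𝓝 lb)) : IntervalIntegrable f volume a b := by
  refine ((continuousOn_Icc_extendFrom_Ioo hf ha hb).intervalIntegrable_of_Icc hab).congr_uIoo ?_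
  rw [uIoo_of_le hab]
  exact fun s hs => extendFrom_extends hf s hs

theorem integral_eq_leftLim_sub_rightLim_add_sum_jumps [NormedSpace ℝ E] [CompleteSpace E]
    (Z : Finset ℝ) (hab : a < b)
    (hF : ∀ s ∈ Icc a b, s ∉ Z → HasDerivAt F (f s) s)
    (hf : ∀ s ∈ Icc a b, s ∉ Z → ContinuousAt f s)
    (hfZ : ∀ p ∈ Z, ∃ l, Tendsto f (𝓝[≠] p) (𝓝 l))
    (hFZ_left : ∀ p ∈ Z, ∃ l, Tendsto F (𝓝[<] p) (𝓝 l))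
    (hFZ_right : ∀ p ∈ Z, ∃ l, Tendsto F (𝓝[>] p) (𝓝 l)) :
    ∫ s in a..b, f s = leftLim F b - rightLim F a
      + ∑ p ∈ Z with p ∈ Ioo a b, (leftLim F p - rightLim F p) := by
  have hf_lim (s : ℝ) (hs : s ∈ Icc a b) : ∃ l, Tendsto f (𝓝[≠] s) (𝓝 l) :=
    if hsZ : s ∈ Z then hfZ s hsZ
    else ⟨f s, (hf s hs hsZ).tendsto.mono_left nhdsWithin_le_nhds⟩
  have hF_left (s : ℝ) (hs : s ∈ Icc a b) : Tendsto F (𝓝[<] s) (𝓝 (leftLim F s)) :=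
    tendsto_leftLim_of_tendsto <| if hsZ : s ∈ Z then hFZ_left s hsZ
    else ⟨F s, (hF s hs hsZ).continuousAt.tendsto.mono_left nhdsWithin_le_nhds⟩
  have hF_right (s : ℝ) (hs : s ∈ Icc a b) : Tendsto F (𝓝[>] s) (𝓝 (rightLim F s)) :=
    tendsto_rightLim_of_tendsto <| if hsZ : s ∈ Z then hFZ_right s hsZ
    else ⟨F s, (hF s hs hsZ).continuousAt.tendsto.mono_left nhdsWithin_le_nhds⟩
  refine (Z.induction_on_Ioo (P := fun a b => IntervalIntegrable f volume a b ∧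
    ∫ s in a..b, f s = leftLim F b - rightLim F a
      + ∑ p ∈ Z with p ∈ Ioo a b, (leftLim F p - rightLim F p)) hab ?_ ?_).2
  · intro a' b' ha' hab' hb' hgap
    have hsub : Icc a' b' ⊆ Icc a b := Icc_subset_Icc ha' hb'
    have hIoo : ∀ s ∈ Ioo a' b', s ∈ Icc a b ∧ s ∉ Z := fun s hs =>
      ⟨hsub (Ioo_subset_Icc_self hs), fun hsZ => hgap s hsZ hs⟩
    obtain ⟨la, hla⟩ := hf_lim a' (hsub (left_mem_Icc.2 hab'.le))
    obtain ⟨lb, hlb⟩ := hf_lim b' (hsub (right_mem_Icc.2 hab'.le))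
    have hint : IntervalIntegrable f volume a' b' :=
      ContinuousOn.intervalIntegrable_of_tendsto hab'.le
        (fun s hs => (hf s (hIoo s hs).1 (hIoo s hs).2).continuousWithinAt)
        (hla.mono_left (nhdsGT_le_nhdsNE a')) (hlb.mono_left (nhdsLT_le_nhdsNE b'))
    refine ⟨hint, ?_⟩
    rw [Finset.filter_false_of_mem fun p hp => hgap p hp, Finset.sum_empty, add_zero]
    exact intervalIntegral.integral_eq_sub_of_hasDerivAt_of_tendsto hab'
      (fun s hs => hF s (hIoo s hs).1 (hIoo s hs).2) hint
      (hF_right a' (hsub (left_mem_Icc.2 hab'.le))) (hF_left b' (hsub (right_mem_Icc.2 hab'.le)))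
  · rintro a' p b' - - hpZ hap hpb ⟨hint₁, heq₁⟩ ⟨hint₂, heq₂⟩
    refine ⟨hint₁.trans hint₂, ?_⟩
    rw [← intervalIntegral.integral_add_adjacent_intervals hint₁ hint₂, heq₁, heq₂,
      Finset.sum_filter_Ioo_eq_add_add Z _ hpZ hap hpb]
    abel

end PiecewiseFTC

theorem sub_eq_smul_slope {E : Type*} [AddCommGroup E] [Module ℝ E] {f : ℝ → E} {t : ℝ} {x : E}
    (ht : f t = x) (s : ℝ) : f s - x = (s - t) • slope f t s := by
  rw [← ht, ← vsub_eq_sub, sub_smul_slope]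

theorem dotp_comm (v w : ℝ × ℝ) : dotp v w = dotp w v := by
  unfold dotp; ring

theorem dotp_smul_left (c : ℝ) (v w : ℝ × ℝ) : dotp (c • v) w = c * dotp v w := by
  simp only [dotp, Prod.smul_fst, Prod.smul_snd, smul_eq_mul]; ring

theorem dotp_smul_right (c : ℝ) (v w : ℝ × ℝ) : dotp v (c • w) = c * dotp v w := by
  rw [dotp_comm, dotp_smul_left, dotp_comm]

theorem dotp_self_pos {v : ℝ × ℝ} (hv : v ≠ 0) : 0 < dotp v v := by
  obtain h | h : v.1 ≠ 0 ∨ v.2 ≠ 0 := by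
    by_contra! h; exact hv (Prod.ext h.1 h.2)
  · exact add_pos_of_pos_of_nonneg (mul_self_pos.2 h) (mul_self_nonneg _)
  · exact add_pos_of_nonneg_of_pos (mul_self_nonneg _) (mul_self_pos.2 h)

theorem HasDerivAt.dotp {f g : ℝ → ℝ × ℝ} {f' g' : ℝ × ℝ} {s : ℝ}
    (hf : HasDerivAt f f' s) (hg : HasDerivAt g g' s) :
    HasDerivAt (fun t => _root_.dotp (f t) (g t))
      (_root_.dotp f' (g s) + _root_.dotp (f s) g') s := by
  have hfst {u : ℝ → ℝ × ℝ} {u'} (h : HasDerivAt u u' s) : HasDerivAt (fun t => (u t).1) u'.1 s :=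
    by simpa using h.hasFDerivAt.fst.hasDerivAt
  have hsnd {u : ℝ → ℝ × ℝ} {u'} (h : HasDerivAt u u' s) : HasDerivAt (fun t => (u t).2) u'.2 s :=
    by simpa using h.hasFDerivAt.snd.hasDerivAt
  refine (((hfst hf).mul (hfst hg)).add ((hsnd hf).mul (hsnd hg))).congr_deriv ?_
  simp only [_root_.dotp]; ring

theorem Filter.Tendsto.dotp {α : Type*} {l : Filter α} {f g : α → ℝ × ℝ} {v w : ℝ × ℝ}
    (hf : Tendsto f l (𝓝 v)) (hg : Tendsto g l (𝓝 w)) :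
    Tendsto (fun t => _root_.dotp (f t) (g t)) l (𝓝 (_root_.dotp v w)) :=
  ((hf.fst_nhds.mul hg.fst_nhds).add (hf.snd_nhds.mul hg.snd_nhds) :)

theorem Continuous.dotp {α : Type*} [TopologicalSpace α] {f g : α → ℝ × ℝ}
    (hf : Continuous f) (hg : Continuous g) : Continuous (fun t => _root_.dotp (f t) (g t)) :=
  continuous_iff_continuousAt.2 fun _ => hf.continuousAt.dotp hg.continuousAt

theorem dotp_perp_self (v : ℝ × ℝ) : dotp v (perp v) = 0 := by
  simp only [dotp, perp]; ring

theorem Continuous.perp {α : Type*} [TopologicalSpace α] {f : α → ℝ × ℝ} (hf : Continuous f) :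
    Continuous fun t => _root_.perp (f t) :=
  hf.snd.neg.prodMk hf.fst

theorem HasDerivAt.perp {f : ℝ → ℝ × ℝ} {f' : ℝ × ℝ} {s : ℝ} (hf : HasDerivAt f f' s) :
    HasDerivAt (fun t => _root_.perp (f t)) (_root_.perp f') s := by
  have h := hf.hasFDerivAt
  exact (h.snd.neg.prodMk h.fst).hasDerivAt.congr_deriv (by simp [_root_.perp])

theorem dotp_self_eq_sq_add_sq {τ : ℝ × ℝ} (hτ : dotp τ τ = 1) (v : ℝ × ℝ) :
    dotp v v = dotp v τ ^ 2 + dotp v (perp τ) ^ 2 := by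
  simp only [dotp, perp] at hτ ⊢
  linear_combination (-(v.1 * v.1 + v.2 * v.2)) * hτ

theorem dotp_eq_mul_of_dotp_eq_zero {τ κ : ℝ × ℝ} (hτ : dotp τ τ = 1) (hκ : dotp κ τ = 0)
    (v : ℝ × ℝ) : dotp v κ = dotp v (perp τ) * dotp κ (perp τ) := by
  simp only [dotp, perp] at hτ hκ ⊢
  linear_combination (-(v.1 * κ.1 + v.2 * κ.2)) * hτ + (v.1 * τ.1 + v.2 * τ.2) * hκ

def chordTangentCos (γ : ℝ → ℝ × ℝ) (x : ℝ × ℝ) (s : ℝ) : ℝ :=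
  dotp (γ s - x) (deriv γ s) / √(dotp (γ s - x) (γ s - x))

def countingIntegrand (γ : ℝ → ℝ × ℝ) (x : ℝ × ℝ) (s : ℝ) : ℝ :=
  ((sCurv γ s) ^ 2
      - (2 * |dotp (γ s - x) (sNu γ s) / dotp (γ s - x) (γ s - x) + sCurv γ s / 2|) ^ 2)
    * √(dotp (γ s - x) (γ s - x))

section UnitSpeedCurve

variable {γ : ℝ → ℝ × ℝ} {x : ℝ × ℝ} {s t : ℝ}

theorem dotp_deriv_deriv_deriv_eq_zero (hγ : ContDiff ℝ 2 γ)
    (harc : ∀ s, dotp (deriv γ s) (deriv γ s) = 1) (s : ℝ) :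
    dotp (deriv (deriv γ) s) (deriv γ s) = 0 := by
  have hd := (hγ.differentiable_deriv_two s).hasDerivAt
  have h := (hd.dotp hd).unique (by simpa only [harc] using hasDerivAt_const s (1 : ℝ))
  rw [dotp_comm (deriv γ s)] at h
  linarith

/-- The integrand written in terms of `a = ⟨v, τ⟩`, `n = ⟨v, ν⟩`, `k` and `r = |v|` for the chord
`v = γ - x`; the right-hand side is `-4` times the derivative of `a / r`. -/
theorem counting_identity {a n k r : ℝ} (hr : 0 < r) (hr2 : r ^ 2 = a ^ 2 + n ^ 2) :
    (k ^ 2 - (2 * |n / r ^ 2 + k / 2|) ^ 2) * r = -4 * ((1 + n * k) / r - a ^ 2 / r ^ 3) := by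
  rw [mul_pow, sq_abs]
  field_simp
  linear_combination 4 * hr2

theorem hasDerivAt_chordTangentCos (hγ : ContDiff ℝ 2 γ)
    (harc : ∀ s, dotp (deriv γ s) (deriv γ s) = 1) (hs : γ s ≠ x) :
    HasDerivAt (fun s => -4 * chordTangentCos γ x s) (countingIntegrand γ x s) s := by
  have hR : 0 < dotp (γ s - x) (γ s - x) := dotp_self_pos (sub_ne_zero.2 hs)
  have hr : 0 < √(dotp (γ s - x) (γ s - x)) := sqrt_pos.2 hR
  have hv : HasDerivAt (fun u => γ u - x) (deriv γ s) s :=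
    ((hγ.differentiable two_ne_zero s).hasDerivAt).sub_const x
  have hcos := (hv.dotp (hγ.differentiable_deriv_two s).hasDerivAt).div
    ((hv.dotp hv).sqrt hR.ne') hr.ne'
  have hr2 : √(dotp (γ s - x) (γ s - x)) ^ 2
      = dotp (γ s - x) (deriv γ s) ^ 2 + dotp (γ s - x) (sNu γ s) ^ 2 := by
    rw [sq_sqrt hR.le]; exact dotp_self_eq_sq_add_sq (harc s) _
  have hκ : dotp (γ s - x) (deriv (deriv γ) s) = dotp (γ s - x) (sNu γ s) * sCurv γ s :=
    dotp_eq_mul_of_dotp_eq_zero (harc s) (dotp_deriv_deriv_deriv_eq_zero hγ harc s) _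
  have key := counting_identity (k := sCurv γ s) hr hr2
  rw [sq_sqrt hR.le] at key
  refine (hcos.const_mul (-4)).congr_deriv ?_
  rw [countingIntegrand, key, harc, hκ, dotp_comm (deriv γ s)]
  field_simp
  ring

theorem chordTangentCos_eq (ht : γ t = x) (s : ℝ) :
    chordTangentCos γ x s = (s - t) / |s - t|
      * (dotp (slope γ t s) (deriv γ s) / √(dotp (slope γ t s) (slope γ t s))) := by
  rw [chordTangentCos, sub_eq_smul_slope ht, dotp_smul_left, dotp_smul_left, dotp_smul_right,
    ← mul_assoc, sqrt_mul (mul_self_nonneg _), sqrt_mul_self_eq_abs, mul_div_mul_comm]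

theorem tendsto_dotp_slope_div (hγ : ContDiff ℝ 1 γ)
    (harc : dotp (deriv γ t) (deriv γ t) = 1) :
    Tendsto (fun s => dotp (slope γ t s) (deriv γ s) / √(dotp (slope γ t s) (slope γ t s)))
      (𝓝[≠] t) (𝓝 1) := by
  have hslope := hasDerivAt_iff_tendsto_slope.1 (hγ.differentiable one_ne_zero t).hasDerivAt
  have hτ : Tendsto (deriv γ) (𝓝[≠] t) (𝓝 (deriv γ t)) :=
    ((hγ.continuous_deriv le_rfl).tendsto t).mono_left nhdsWithin_le_nhds
  have h := (hslope.dotp hτ).div (hslope.dotp hslope).sqrt (by simp [harc])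
  rw [harc, sqrt_one, div_one] at h
  exact h

theorem tendsto_chordTangentCos_nhdsGT (hγ : ContDiff ℝ 1 γ)
    (harc : dotp (deriv γ t) (deriv γ t) = 1) (ht : γ t = x) :
    Tendsto (chordTangentCos γ x) (𝓝[>] t) (𝓝 1) := by
  refine ((tendsto_dotp_slope_div hγ harc).mono_left (nhdsGT_le_nhdsNE t)).congr' ?_
  filter_upwards [self_mem_nhdsWithin] with s (hs : t < s)
  rw [chordTangentCos_eq ht, abs_of_pos (sub_pos.2 hs),
    div_self (sub_pos.2 hs).ne', one_mul]

theorem tendsto_chordTangentCos_nhdsLT (hγ : ContDiff ℝ 1 γ)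
    (harc : dotp (deriv γ t) (deriv γ t) = 1) (ht : γ t = x) :
    Tendsto (chordTangentCos γ x) (𝓝[<] t) (𝓝 (-1)) := by
  refine ((tendsto_dotp_slope_div hγ harc).neg.mono_left (nhdsLT_le_nhdsNE t)).congr' ?_
  filter_upwards [self_mem_nhdsWithin] with s (hs : s < t)
  rw [chordTangentCos_eq ht, abs_of_neg (sub_neg.2 hs), div_neg,
    div_self (sub_neg.2 hs).ne, neg_one_mul]

theorem continuous_sNu (hγ : ContDiff ℝ 1 γ) : Continuous (sNu γ) :=
  (hγ.continuous_deriv le_rfl).perp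

theorem continuous_sCurv (hγ : ContDiff ℝ 2 γ) : Continuous (sCurv γ) :=
  ((hγ.deriv' (n := 1)).continuous_deriv le_rfl).dotp (continuous_sNu (hγ.of_le one_le_two))

theorem tendsto_dotp_sNu_div (hγ : ContDiff ℝ 2 γ)
    (harc : ∀ s, dotp (deriv γ s) (deriv γ s) = 1) (ht : γ t = x) :
    Tendsto (fun s => dotp (γ s - x) (sNu γ s) / dotp (γ s - x) (γ s - x)) (𝓝[≠] t)
      (𝓝 (-sCurv γ t / 2)) := by
  have hv (s : ℝ) : HasDerivAt (fun u => γ u - x) (deriv γ s) s :=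
    ((hγ.differentiable two_ne_zero s).hasDerivAt).sub_const x
  have hφ (s : ℝ) : HasDerivAt (fun u => dotp (γ u - x) (sNu γ u))
      (dotp (γ s - x) (perp (deriv (deriv γ) s))) s :=
    ((hv s).dotp (hγ.differentiable_deriv_two s).hasDerivAt.perp).congr_deriv
      (by rw [dotp_perp_self, zero_add])
  have hR (s : ℝ) : HasDerivAt (fun u => dotp (γ u - x) (γ u - x))
      (2 * dotp (γ s - x) (deriv γ s)) s :=
    ((hv s).dotp (hv s)).congr_deriv (by rw [dotp_comm (deriv γ s)]; ring)
  have hslope : Tendsto (slope γ t) (𝓝[≠] t) (𝓝 (deriv γ t)) :=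
    hasDerivAt_iff_tendsto_slope.1 ((hγ.differentiable two_ne_zero t).hasDerivAt)
  have hτ : Tendsto (fun s => dotp (slope γ t s) (deriv γ s)) (𝓝[≠] t) (𝓝 1) := by
    rw [← harc t]
    exact hslope.dotp (((hγ.continuous_deriv one_le_two).tendsto t).mono_left nhdsWithin_le_nhds)
  have hκ : Tendsto (fun s => dotp (slope γ t s) (perp (deriv (deriv γ) s))) (𝓝[≠] t)
      (𝓝 (-sCurv γ t)) := by
    have hc : Continuous fun s => perp (deriv (deriv γ) s) :=
      ((hγ.deriv' (n := 1)).continuous_deriv le_rfl).perp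
    convert hslope.dotp ((hc.tendsto t).mono_left nhdsWithin_le_nhds) using 2
    simp only [sCurv, sNu, dotp, perp]; ring
  have hzero {f : ℝ → ℝ} {f' : ℝ} (hf : HasDerivAt f f' t) (hft : f t = 0) :
      Tendsto f (𝓝[≠] t) (𝓝 0) :=
    hft ▸ hf.continuousAt.tendsto.mono_left nhdsWithin_le_nhds
  refine HasDerivAt.lhopital_zero_nhdsNE (.of_forall hφ) (.of_forall hR) ?_
    (hzero (hφ t) (by simp [ht, dotp])) (hzero (hR t) (by simp [ht, dotp])) ?_
  · filter_upwards [self_mem_nhdsWithin, hτ.eventually_ne one_ne_zero] with s (hs : s ≠ t) hne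
    rw [sub_eq_smul_slope ht, dotp_smul_left]
    exact mul_ne_zero two_ne_zero (mul_ne_zero (sub_ne_zero.2 hs) hne)
  · refine ((hκ.div (hτ.const_mul 2) (by norm_num)).congr' ?_).trans (by norm_num)
    filter_upwards [self_mem_nhdsWithin] with s (hs : s ≠ t)
    rw [Pi.div_apply, sub_eq_smul_slope ht, dotp_smul_left, dotp_smul_left, mul_left_comm,
      mul_div_mul_left _ _ (sub_ne_zero.2 hs)]

theorem tendsto_countingIntegrand (hγ : ContDiff ℝ 2 γ)
    (harc : ∀ s, dotp (deriv γ s) (deriv γ s) = 1) (ht : γ t = x) :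
    Tendsto (countingIntegrand γ x) (𝓝[≠] t) (𝓝 0) := by
  have hk : Tendsto (sCurv γ) (𝓝[≠] t) (𝓝 (sCurv γ t)) :=
    ((continuous_sCurv hγ).tendsto t).mono_left nhdsWithin_le_nhds
  have hr : Tendsto (fun s => √(dotp (γ s - x) (γ s - x))) (𝓝[≠] t) (𝓝 0) := by
    have hc : Continuous fun s => √(dotp (γ s - x) (γ s - x)) :=
      ((hγ.continuous.sub continuous_const).dotp (hγ.continuous.sub continuous_const)).sqrt
    simpa [ht, dotp] using (hc.tendsto t).mono_left nhdsWithin_le_nhds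
  have h := ((hk.pow 2).sub ((((tendsto_dotp_sNu_div hγ harc ht).add
    (hk.div_const 2)).abs.const_mul 2).pow 2)).mul hr
  rwa [mul_zero] at h

theorem continuousAt_countingIntegrand (hγ : ContDiff ℝ 2 γ) (hs : γ s ≠ x) :
    ContinuousAt (countingIntegrand γ x) s := by
  have hv : Continuous fun u => γ u - x := hγ.continuous.sub continuous_const
  have hν := continuous_sNu (hγ.of_le one_le_two)
  have hk := (continuous_sCurv hγ).continuousAt (x := s)
  have hR := (hv.dotp hv).continuousAt (x := s)
  exact ((hk.pow 2).sub ((((hv.dotp hν).continuousAt.div hR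
    (dotp_self_pos (sub_ne_zero.2 hs)).ne').add (hk.div_const 2)).abs.const_mul 2 |>.pow 2)).mul
    hR.sqrt

theorem leftLim_chordTangentCos (hγ : ContDiff ℝ 1 γ)
    (harc : dotp (deriv γ t) (deriv γ t) = 1) (ht : γ t = x) :
    leftLim (fun s => -4 * chordTangentCos γ x s) t = 4 :=
  leftLim_eq_of_tendsto (by simpa using (tendsto_chordTangentCos_nhdsLT hγ harc ht).const_mul (-4))

theorem rightLim_chordTangentCos (hγ : ContDiff ℝ 1 γ)
    (harc : dotp (deriv γ t) (deriv γ t) = 1) (ht : γ t = x) :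
    rightLim (fun s => -4 * chordTangentCos γ x s) t = -4 :=
  rightLim_eq_of_tendsto (by simpa using (tendsto_chordTangentCos_nhdsGT hγ harc ht).const_mul (-4))

theorem integral_countingIntegrand (hγ : ContDiff ℝ 2 γ)
    (harc : ∀ s, dotp (deriv γ s) (deriv γ s) = 1) {a b : ℝ} (hab : a < b)
    (hZ : {s ∈ Icc a b | γ s = x}.Finite) :
    ∫ s in a..b, countingIntegrand γ x s
      = leftLim (fun s => -4 * chordTangentCos γ x s) b
        - rightLim (fun s => -4 * chordTangentCos γ x s) a
        + 8 * {s ∈ Ioo a b | γ s = x}.ncard := by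
  have hγ₁ : ContDiff ℝ 1 γ := hγ.of_le one_le_two
  have hmem (s : ℝ) : s ∈ hZ.toFinset ↔ s ∈ Icc a b ∧ γ s = x := by simp
  have hoff (s : ℝ) (hs : s ∈ Icc a b) (hsZ : s ∉ hZ.toFinset) : γ s ≠ x :=
    fun h => hsZ ((hmem s).2 ⟨hs, h⟩)
  rw [integral_eq_leftLim_sub_rightLim_add_sum_jumps hZ.toFinset hab
    (fun s hs hsZ => hasDerivAt_chordTangentCos hγ harc (hoff s hs hsZ))
    (fun s hs hsZ => continuousAt_countingIntegrand hγ (hoff s hs hsZ))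
    (fun p hp => ⟨0, tendsto_countingIntegrand hγ harc ((hmem p).1 hp).2⟩)
    (fun p hp => ⟨_, (tendsto_chordTangentCos_nhdsLT hγ₁ (harc p) ((hmem p).1 hp).2).const_mul _⟩)
    (fun p hp => ⟨_, (tendsto_chordTangentCos_nhdsGT hγ₁ (harc p) ((hmem p).1 hp).2).const_mul _⟩)]
  congr 1
  have hjump : ∀ p ∈ {p ∈ hZ.toFinset | p ∈ Ioo a b},
      leftLim (fun s => -4 * chordTangentCos γ x s) p
        - rightLim (fun s => -4 * chordTangentCos γ x s) p = 8 := fun p hp => by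
    have hp := ((hmem p).1 (Finset.mem_filter.1 hp).1).2
    rw [leftLim_chordTangentCos hγ₁ (harc p) hp, rightLim_chordTangentCos hγ₁ (harc p) hp]
    norm_num
  rw [Finset.sum_congr rfl hjump, Finset.sum_const, nsmul_eq_mul, mul_comm, ← ncard_coe_finset]
  congr 3
  ext s
  simp only [Finset.coe_filter, Finite.mem_toFinset]
  exact ⟨fun h => ⟨h.2, h.1.2⟩, fun h => ⟨⟨Ioo_subset_Icc_self h.1, h.2⟩, h.1⟩⟩

theorem chordTangentCos_add_period {L : ℝ} (hper : ∀ s, γ (s + L) = γ s)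
    (s : ℝ) : chordTangentCos γ x (s + L) = chordTangentCos γ x s := by
  have hd : deriv γ (s + L) = deriv γ s := by
    rw [← deriv_comp_add_const, funext hper]
  rw [chordTangentCos, chordTangentCos, hper, hd]

theorem leftLim_sub_rightLim_chordTangentCos (hγ : ContDiff ℝ 2 γ)
    (harc : ∀ s, dotp (deriv γ s) (deriv γ s) = 1) {L : ℝ} (hper : ∀ s, γ (s + L) = γ s) :
    leftLim (fun s => -4 * chordTangentCos γ x s) L
      - rightLim (fun s => -4 * chordTangentCos γ x s) 0 = if γ 0 = x then 8 else 0 := by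
  have hγL : γ L = γ 0 := by simpa using hper 0
  split_ifs with h0
  · rw [leftLim_chordTangentCos (hγ.of_le one_le_two) (harc L) (hγL.trans h0),
      rightLim_chordTangentCos (hγ.of_le one_le_two) (harc 0) h0]
    norm_num
  · have hcont (s : ℝ) (hs : γ s ≠ x) : ContinuousAt (fun s => -4 * chordTangentCos γ x s) s :=
      (hasDerivAt_chordTangentCos hγ harc hs).continuousAt
    rw [(hcont L (hγL ▸ h0)).continuousWithinAt.leftLim_eq,
      (hcont 0 h0).continuousWithinAt.rightLim_eq, ← zero_add L, chordTangentCos_add_period hper]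
    ring

end UnitSpeedCurve

theorem stmt_19_general
    (γ : ℝ → ℝ × ℝ) (L : ℝ) (hL : 0 < L)
    (hsmooth : ContDiff ℝ (⊤ : ℕ∞) γ)
    (hper : ∀ s, γ (s + L) = γ s)
    (harc : ∀ s, dotp (deriv γ s) (deriv γ s) = 1)
    (x : ℝ × ℝ)
    (hfin : ({s ∈ Set.Ico 0 L | γ s = x}).Finite) :
    (8 : ℝ) * ({s ∈ Set.Ico 0 L | γ s = x}).ncard
      = ∫ s in (0:ℝ)..L,
          ((sCurv γ s)^2
              - (2 * |dotp (γ s - x) (sNu γ s) / dotp (γ s - x) (γ s - x)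
                    + sCurv γ s / 2|)^2)
            * Real.sqrt (dotp (γ s - x) (γ s - x)) := by
  have hγ : ContDiff ℝ 2 γ := hsmooth.of_le (WithTop.coe_le_coe.2 le_top)
  have hZ : {s ∈ Icc 0 L | γ s = x}.Finite := by
    refine (hfin.insert L).subset fun s ⟨hs, hsx⟩ => ?_
    rcases hs.2.eq_or_lt with rfl | hsL
    · exact mem_insert _ _
    · exact mem_insert_of_mem _ ⟨⟨hs.1, hsL⟩, hsx⟩
  change _ = ∫ s in (0:ℝ)..L, countingIntegrand γ x s
  rw [integral_countingIntegrand hγ harc hL hZ, leftLim_sub_rightLim_chordTangentCos hγ harc hper,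
    ncard_sep_Ico_eq hL _ (hZ.subset fun s ⟨hs, hsx⟩ => ⟨Ioo_subset_Icc_self hs, hsx⟩)]
  split_ifs <;> push_cast <;> ring

/-- **Counting multiplicity by integration** (Lemma 5.1): for a smooth closed
immersed arc-length parametrised plane curve of length `L` and a point `x` on
the curve with finitely many preimages in one period,
`8 #γ⁻¹(x) = ∫_γ (k² - k₀²)|γ - x| ds`, where
`k₀ = 2|⟨γ - x, ν⟩/|γ - x|² + k/2|`.  (The finitely many points where
`γ s = x` form a set of measure zero, so the value of the integrand there is
irrelevant to the integral; this realises the extension of the integrand by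
its finite limiting values.) -/
theorem stmt_19
    (γ : ℝ → ℝ × ℝ) (L : ℝ) (hL : 0 < L)
    (hsmooth : ContDiff ℝ (⊤ : ℕ∞) γ)
    (hper : ∀ s, γ (s + L) = γ s)
    (harc : ∀ s, dotp (deriv γ s) (deriv γ s) = 1)
    (x : ℝ × ℝ) (hx : ∃ s, γ s = x)
    (hfin : ({s ∈ Set.Ico 0 L | γ s = x}).Finite) :
    (8 : ℝ) * ({s ∈ Set.Ico 0 L | γ s = x}).ncard
      = ∫ s in (0:ℝ)..L,
          ((sCurv γ s)^2
              - (2 * |dotp (γ s - x) (sNu γ s) / dotp (γ s - x) (γ s - x)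
                    + sCurv γ s / 2|)^2)
            * Real.sqrt (dotp (γ s - x) (γ s - x)) :=
  stmt_19_general γ L hL hsmooth hper harc x hfin

end
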